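/- arXiv:2405.13526 — 3 statements merged into one kernel-verified Lean document; each statement's English description precedes it below -/
import Mathlib

section
/- Consider a 2-layer linear MPNN with residual connections, H^(1) = H + A H W^(0), H^(2) = H^(1) + A H^(1) W^(1), followed by mean pooling and a linear map: Y_2 = Θ̃ · (H^(2))ᵀ𝟙/n. If the induced polynomial-filter coefficient Θ_0 = Θ̃(I) vanishes (i.e., the zeroth-order term of Y_2 as a polynomial in A vanishes for all inputs H), then Θ̃ = 0 and hence Y_2 ≡ 0. That is, the only degree-2 polynomial filter with vanishing zeroth-order term learnable by a 2-layer linear MPNN with mean pooling is the trivial one. -/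
open Matrix

lemma mean_replicate_row {R κ : Type*} [Field R] [CharZero R] {n : ℕ} (hn : n ≠ 0)
    (v : κ → R) : (fun p => (∑ _i : Fin n, v p) / n) = v := by
  funext p
  rw [Finset.sum_const, Finset.card_univ, Fintype.card_fin, nsmul_eq_mul,
    mul_div_cancel_left₀ _ (Nat.cast_ne_zero.mpr hn)]

/-- A 2-layer linear MPNN `H⁽¹⁾ = H + AHW⁽⁰⁾`, `H⁽²⁾ = H⁽¹⁾ + AH⁽¹⁾W⁽¹⁾` with mean
pooling `Y₂ = Θ̃ (H⁽²⁾)ᵀ𝟙/n`: if the zeroth-order polynomial-filter coefficient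
vanishes (i.e. `Θ̃ Mean(H) = 0` for all inputs `H`), then `Θ̃ = 0` and `Y₂ ≡ 0`. -/
theorem linear_mpnn_mean_pooling_zero_order_trivial
    (n d : ℕ) (hn : 0 < n)
    (A : Matrix (Fin n) (Fin n) ℝ)
    (W0 W1 Θ : Matrix (Fin d) (Fin d) ℝ)
    (hzero : ∀ H : Matrix (Fin n) (Fin d) ℝ,
      Θ.mulVec (fun p => (∑ i, H i p) / n) = 0) :
    Θ = 0 ∧
    ∀ H : Matrix (Fin n) (Fin d) ℝ,
      Θ.mulVec
        (fun p => (∑ i, ((H + A * H * W0) + A * (H + A * H * W0) * W1) i p) / n)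
        = 0 := by
  have hΘ : Θ = 0 := ext_iff_mulVec.2 fun v => by
    rw [zero_mulVec, ← mean_replicate_row hn.ne' v]
    exact hzero fun _ => v
  exact ⟨hΘ, fun H => by rw [hΘ, zero_mulVec]⟩
end

section
/- Consider a 2-layer linear MPNN with a virtual node: H^(1) = H + A H W^(0), H^(2) = H^(1) + A H^(1) W^(1) + (1/n)𝟙𝟙ᵀ H Q^(1), followed by Y_2 = Θ̃ Mean(H^(2)). Then for any invertible Θ_1, Θ_2 ∈ ℝ^{d×d} there exist weights W^(0), W^(1), Q^(1), Θ̃ realizing the polynomial filter Y_2 = Θ_1 Mean(AH) + Θ_2 Mean(A²H) with vanishing zeroth-order coefficient (Θ_0 = 0). In particular, there exist nontrivial degree-2 polynomial filters learnable by a linear MPNN+VN but not by a linear MPNN without virtual node. -/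
open Matrix

/-!
Averaging over the nodes commutes with right multiplication by a weight matrix and kills the
`1/n` in front of the virtual-node term, so `Mean(H⁽²⁾)` expands as
`(I + Qᵀ) Mean(H) + (W⁽⁰⁾ᵀ + W⁽¹⁾ᵀ) Mean(AH) + W⁽¹⁾ᵀW⁽⁰⁾ᵀ Mean(A²H)`.
Taking `Q = -I` removes the zeroth-order term, and with `W⁽⁰⁾ᵀ = W⁽¹⁾ᵀ = B := 2 Θ₁⁻¹Θ₂` and
`Θ̃ := ¼ Θ₁Θ₂⁻¹Θ₁` one gets `Θ̃ (B + B) = Θ₁` and `Θ̃ B B = Θ₂`.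
-/

section ColumnAverage

variable {m m' k l : Type*} [Fintype m]

/-- With `c` the number of rows, this is the paper's `Mean(X) = Xᵀ𝟙 / n`. -/
noncomputable def colAvg (c : ℝ) (X : Matrix m k ℝ) : k → ℝ := fun p => (∑ i, X i p) / c

theorem colAvg_add (c : ℝ) (X Y : Matrix m k ℝ) :
    colAvg c (X + Y) = colAvg c X + colAvg c Y := by
  funext p
  simp only [colAvg, Matrix.add_apply, Finset.sum_add_distrib, add_div, Pi.add_apply]

theorem colAvg_smul (c r : ℝ) (X : Matrix m k ℝ) : colAvg c (r • X) = r • colAvg c X := by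
  funext p
  simp only [colAvg, Matrix.smul_apply, smul_eq_mul, ← Finset.mul_sum, mul_div_assoc,
    Pi.smul_apply]

theorem colAvg_mul [Fintype k] (c : ℝ) (X : Matrix m k ℝ) (W : Matrix k l ℝ) :
    colAvg c (X * W) = Wᵀ *ᵥ colAvg c X := by
  funext p
  simp only [colAvg, mul_apply, mulVec, dotProduct, transpose_apply]
  rw [Finset.sum_comm, Finset.sum_div]
  refine Finset.sum_congr rfl fun q _ => ?_
  rw [← Finset.sum_mul]
  ring

theorem colAvg_ones_mul [Fintype m'] (c : ℝ) (X : Matrix m k ℝ) :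
    colAvg c (of (fun (_ : m') (_ : m) => (1 : ℝ)) * X) = (Fintype.card m' : ℝ) • colAvg c X := by
  funext p
  simp only [colAvg, mul_apply, of_apply, one_mul, Finset.sum_const, Finset.card_univ,
    nsmul_eq_mul, mul_div_assoc, Pi.smul_apply, smul_eq_mul]

end ColumnAverage

theorem colAvg_linearMPNNVN_layer2 {n d : ℕ} (hn : n ≠ 0) (A : Matrix (Fin n) (Fin n) ℝ)
    (W0 W1 Q : Matrix (Fin d) (Fin d) ℝ) (H : Matrix (Fin n) (Fin d) ℝ) :
    colAvg n ((H + A * H * W0) + A * (H + A * H * W0) * W1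
        + ((1 : ℝ) / n) • (of (fun (_ : Fin n) (_ : Fin n) => (1 : ℝ)) * H * Q))
      = (1 + Qᵀ) *ᵥ colAvg n H + (W0ᵀ + W1ᵀ) *ᵥ colAvg n (A * H)
        + (W1ᵀ * W0ᵀ) *ᵥ colAvg n (A * A * H) := by
  have hn' : (n : ℝ) ≠ 0 := Nat.cast_ne_zero.mpr hn
  have virtual_node : colAvg n ((1 / n : ℝ) • (of (fun (_ : Fin n) (_ : Fin n) => (1 : ℝ)) * H * Q))
      = Qᵀ *ᵥ colAvg n H := by
    rw [colAvg_smul, colAvg_mul, colAvg_ones_mul, Fintype.card_fin, mulVec_smul, smul_smul,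
      one_div_mul_cancel hn', one_smul]
  have expand : H + A * H * W0 + A * (H + A * H * W0) * W1 = H + A * H * (W0 + W1)
      + A * A * H * (W0 * W1) := by
    simp only [Matrix.mul_add, Matrix.add_mul, Matrix.mul_assoc]
    abel
  rw [expand, colAvg_add, colAvg_add, colAvg_add, virtual_node, colAvg_mul _ (A * H),
    colAvg_mul _ (A * A * H), transpose_add, transpose_mul, add_mulVec, add_mulVec 1, one_mulVec]
  abel

theorem exists_mul_add_self_eq_and_mul_mul_self_eq {d : Type*} [Fintype d] [DecidableEq d]
    {Θ1 Θ2 : Matrix d d ℝ} (h1 : IsUnit Θ1.det) (h2 : IsUnit Θ2.det) :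
    ∃ B T : Matrix d d ℝ, T * (B + B) = Θ1 ∧ T * (B * B) = Θ2 := by
  refine ⟨(2 : ℝ) • (Θ1⁻¹ * Θ2), (1 / 4 : ℝ) • (Θ1 * Θ2⁻¹ * Θ1), ?_⟩
  have hTB : (1 / 4 : ℝ) • (Θ1 * Θ2⁻¹ * Θ1) * ((2 : ℝ) • (Θ1⁻¹ * Θ2)) = (1 / 2 : ℝ) • Θ1 := by
    rw [smul_mul_smul_comm, show Θ1 * Θ2⁻¹ * Θ1 * (Θ1⁻¹ * Θ2) = Θ1 * Θ2⁻¹ * (Θ1 * Θ1⁻¹) * Θ2 by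
      simp only [Matrix.mul_assoc], mul_nonsing_inv _ h1, Matrix.mul_one, Matrix.mul_assoc,
      nonsing_inv_mul _ h2, Matrix.mul_one]
    norm_num
  constructor
  · rw [Matrix.mul_add, hTB, ← add_smul]
    norm_num
  · rw [← Matrix.mul_assoc, hTB, smul_mul_smul_comm, ← Matrix.mul_assoc, mul_nonsing_inv _ h1,
      Matrix.one_mul]
    norm_num

/-- A 2-layer linear MPNN + VN,
`H⁽¹⁾ = H + AHW⁽⁰⁾`, `H⁽²⁾ = H⁽¹⁾ + AH⁽¹⁾W⁽¹⁾ + (1/n)𝟙𝟙ᵀHQ⁽¹⁾`, `Y₂ = Θ̃ Mean(H⁽²⁾)`: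
for any invertible `Θ₁, Θ₂` there exist weights `W⁽⁰⁾, W⁽¹⁾, Q⁽¹⁾, Θ̃` realizing the
filter `Y₂ = Θ₁ Mean(AH) + Θ₂ Mean(A²H)` with vanishing zeroth-order coefficient
`Θ₀ = Θ̃(I + (Q⁽¹⁾)ᵀ) = 0`. -/
theorem linear_mpnn_vn_realizes_filters_without_zeroth_order
    (n d : ℕ) (hn : 0 < n)
    (A : Matrix (Fin n) (Fin n) ℝ)
    (Θ1 Θ2 : Matrix (Fin d) (Fin d) ℝ)
    (h1 : IsUnit Θ1.det) (h2 : IsUnit Θ2.det) :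
    ∃ (W0 W1 Q Θ : Matrix (Fin d) (Fin d) ℝ),
      Θ * (1 + Qᵀ) = 0 ∧
      ∀ H : Matrix (Fin n) (Fin d) ℝ,
        Θ.mulVec
          (fun p =>
            (∑ i, (((H + A * H * W0) + A * (H + A * H * W0) * W1)
              + ((1 : ℝ) / n) • ((Matrix.of fun (_ : Fin n) (_ : Fin n) => (1 : ℝ)) * H * Q)) i p) / n)
          = Θ1.mulVec (fun p => (∑ i, (A * H) i p) / n)
            + Θ2.mulVec (fun p => (∑ i, (A * A * H) i p) / n) := by
  obtain ⟨B, T, hΘ1, hΘ2⟩ := exists_mul_add_self_eq_and_mul_mul_self_eq h1 h2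
  refine ⟨Bᵀ, Bᵀ, -1, T, by simp, fun H => ?_⟩
  change T *ᵥ colAvg n _ = Θ1 *ᵥ colAvg n (A * H) + Θ2 *ᵥ colAvg n (A * A * H)
  rw [colAvg_linearMPNNVN_layer2 hn.ne', transpose_neg, transpose_one, add_neg_cancel,
    zero_mulVec, zero_add, transpose_transpose, mulVec_add, mulVec_mulVec, mulVec_mulVec, hΘ1, hΘ2]
end

section
/- Consider an MPNN+VN where the virtual-node update is h_vn^(ℓ+1) = σ(Ω_vn h_vn^(ℓ) + W_vn · (1/n)Σ_j h_j^(ℓ)) and the node update is h_i^(ℓ+1) = σ(Ω h_i^(ℓ) + Σ_j A_{ij} ψ(h_i^(ℓ), h_j^(ℓ)) + ψ_vn(h_i^(ℓ), h_vn^(ℓ))). Then for any two nodes i, k at graph distance greater than 2, the Jacobian ∂h_i^(ℓ+1)/∂h_k^(ℓ-1) equals (1/n)·diag(σ'(z_i^(ℓ)))·∇_2 ψ_vn(h_i^(ℓ), h_vn^(ℓ))·diag(σ'(z_vn^(ℓ-1)))·W_vn, which is independent of k. -/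
/-!
Because `dist(i, k) > 2`, neither node `i` nor any neighbour of `i` sees `h_k` in the first
layer, so after two layers `h_k` reaches node `i` only through the mean aggregation of the
virtual node. The Jacobian is therefore the chain rule along
`h_k ↦ h_vn⁽ℓ⁾ ↦ h_i⁽ℓ⁺¹⁾`, and the mean contributes the factor `1/n` whatever `k` is.
-/

open Matrix

section Pointwise

variable {E ι : Type*} [NormedAddCommGroup E] [NormedSpace ℝ E]
  {σ : ℝ → ℝ} {f : E → ι → ℝ} {x : E}

theorem HasFDerivAt.pointwise_comp {f' : E →L[ℝ] ι → ℝ}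
    (hσ : ∀ a, DifferentiableAt ℝ σ (f x a)) (hf : HasFDerivAt f f' x) :
    HasFDerivAt (fun y a => σ (f y a))
      (ContinuousLinearMap.pi fun a => deriv σ (f x a) • (ContinuousLinearMap.proj a).comp f') x :=
  hasFDerivAt_pi'.2 fun a => (hσ a).hasDerivAt.comp_hasFDerivAt x (hasFDerivAt_pi'.1 hf a)

theorem DifferentiableAt.pointwise_comp (hσ : ∀ a, DifferentiableAt ℝ σ (f x a))
    (hf : DifferentiableAt ℝ f x) : DifferentiableAt ℝ (fun y a => σ (f y a)) x :=
  (hf.hasFDerivAt.pointwise_comp hσ).differentiableAt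

theorem fderiv_pointwise_comp_apply (hσ : ∀ a, DifferentiableAt ℝ σ (f x a))
    (hf : DifferentiableAt ℝ f x) (v : E) :
    fderiv ℝ (fun y a => σ (f y a)) x v = fun a => deriv σ (f x a) * fderiv ℝ f x v a := by
  rw [(hf.hasFDerivAt.pointwise_comp hσ).fderiv]
  rfl

end Pointwise

theorem hasFDerivAt_sum_update {E ι : Type*} [NormedAddCommGroup E] [NormedSpace ℝ E]
    [Fintype ι] [DecidableEq ι] (H : ι → E) (k : ι) (y : E) :
    HasFDerivAt (fun x => ∑ j, Function.update H k x j) (ContinuousLinearMap.id ℝ E) y := by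
  simp_rw [Finset.sum_update_of_mem (Finset.mem_univ k)]
  exact (hasFDerivAt_id y).add_const _

noncomputable section Layers

variable {ι κ : Type*} [Fintype ι] [Fintype κ]

def mpnnPreact (A : Matrix ι ι ℝ) (Ω : Matrix κ κ ℝ) (ψ ψvn : (κ → ℝ) → (κ → ℝ) → κ → ℝ)
    (H : ι → κ → ℝ) (hvn : κ → ℝ) (j : ι) : κ → ℝ :=
  Ω *ᵥ H j + ∑ u, A j u • ψ (H j) (H u) + ψvn (H j) hvn

def mpnnLayer (A : Matrix ι ι ℝ) (σ : ℝ → ℝ) (Ω : Matrix κ κ ℝ)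
    (ψ ψvn : (κ → ℝ) → (κ → ℝ) → κ → ℝ) (H : ι → κ → ℝ) (hvn : κ → ℝ) (j : ι) : κ → ℝ :=
  fun a => σ (mpnnPreact A Ω ψ ψvn H hvn j a)

def vnPreact {n : ℕ} (Ωvn Wvn : Matrix κ κ ℝ) (hvn : κ → ℝ) (H : Fin n → κ → ℝ) : κ → ℝ :=
  Ωvn *ᵥ hvn + Wvn *ᵥ (((1 : ℝ) / n) • ∑ j, H j)

def vnLayer {n : ℕ} (σ : ℝ → ℝ) (Ωvn Wvn : Matrix κ κ ℝ) (hvn : κ → ℝ) (H : Fin n → κ → ℝ) :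
    κ → ℝ :=
  fun a => σ (vnPreact Ωvn Wvn hvn H a)

variable {A : Matrix ι ι ℝ} {σ : ℝ → ℝ} {Ω : Matrix κ κ ℝ}
  {ψ ψvn : (κ → ℝ) → (κ → ℝ) → κ → ℝ}

theorem mpnnLayer_congr {H H' : ι → κ → ℝ} (hvn : κ → ℝ) {j : ι} (hj : H j = H' j)
    (hadj : ∀ u, A j u ≠ 0 → H u = H' u) :
    mpnnLayer A σ Ω ψ ψvn H hvn j = mpnnLayer A σ Ω ψ ψvn H' hvn j := by
  have hsum : ∑ u, A j u • ψ (H j) (H u) = ∑ u, A j u • ψ (H' j) (H' u) := by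
    refine Finset.sum_congr rfl fun u _ => ?_
    by_cases hu : A j u = 0
    · simp [hu]
    · rw [hj, hadj u hu]
  unfold mpnnLayer mpnnPreact
  rw [hsum, hj]

theorem mpnnLayer_mpnnLayer_update_of_dist_gt_two [DecidableEq ι] (H : ι → κ → ℝ)
    (hvn v x : κ → ℝ) {i k : ι} (hik : i ≠ k) (hAik : A i k = 0)
    (hno_common : ∀ j, A i j ≠ 0 → A j k = 0 ∧ j ≠ k) :
    mpnnLayer A σ Ω ψ ψvn (mpnnLayer A σ Ω ψ ψvn (Function.update H k x) hvn) v i =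
      mpnnLayer A σ Ω ψ ψvn (mpnnLayer A σ Ω ψ ψvn H hvn) v i := by
  have hlocal : ∀ j, j ≠ k → A j k = 0 →
      mpnnLayer A σ Ω ψ ψvn (Function.update H k x) hvn j = mpnnLayer A σ Ω ψ ψvn H hvn j :=
    fun j hjk hAjk => mpnnLayer_congr hvn (Function.update_of_ne hjk x H)
      fun u hu => Function.update_of_ne (ne_of_apply_ne (A j) (by rwa [hAjk])) x H
  refine mpnnLayer_congr v (hlocal i hik hAik) fun j hj => ?_
  exact hlocal j (hno_common j hj).2 (hno_common j hj).1

theorem hasFDerivAt_mpnnPreact_vn (H : ι → κ → ℝ) (j : ι) {v : κ → ℝ}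
    (hψvn : DifferentiableAt ℝ (ψvn (H j)) v) :
    HasFDerivAt (fun v => mpnnPreact A Ω ψ ψvn H v j) (fderiv ℝ (ψvn (H j)) v) v :=
  hψvn.hasFDerivAt.const_add _

theorem differentiableAt_mpnnLayer_vn (hσ : Differentiable ℝ σ) (H : ι → κ → ℝ) (j : ι)
    {v : κ → ℝ} (hψvn : DifferentiableAt ℝ (ψvn (H j)) v) :
    DifferentiableAt ℝ (fun v => mpnnLayer A σ Ω ψ ψvn H v j) v :=
  (hasFDerivAt_mpnnPreact_vn H j hψvn).differentiableAt.pointwise_comp fun _ => hσ _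

theorem fderiv_mpnnLayer_vn_apply (hσ : Differentiable ℝ σ) (H : ι → κ → ℝ) (j : ι)
    {v : κ → ℝ} (hψvn : DifferentiableAt ℝ (ψvn (H j)) v) (w : κ → ℝ) :
    fderiv ℝ (fun v => mpnnLayer A σ Ω ψ ψvn H v j) v w =
      fun a => deriv σ (mpnnPreact A Ω ψ ψvn H v j a) * fderiv ℝ (ψvn (H j)) v w a := by
  rw [← (hasFDerivAt_mpnnPreact_vn H j hψvn).fderiv]
  exact fderiv_pointwise_comp_apply (fun _ => hσ _)
    (hasFDerivAt_mpnnPreact_vn H j hψvn).differentiableAt w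

variable {n : ℕ} {Ωvn Wvn : Matrix κ κ ℝ}

theorem hasFDerivAt_vnPreact_update (hvn : κ → ℝ) (H : Fin n → κ → ℝ) (k : Fin n)
    (y : κ → ℝ) :
    HasFDerivAt (fun x => vnPreact Ωvn Wvn hvn (Function.update H k x))
      (((1 : ℝ) / n) • LinearMap.toContinuousLinearMap Wvn.mulVecLin) y := by
  have := ((LinearMap.toContinuousLinearMap Wvn.mulVecLin).hasFDerivAt.comp y
    ((hasFDerivAt_sum_update H k y).const_smul ((1 : ℝ) / n))).const_add (Ωvn *ᵥ hvn)
  refine this.congr_fderiv ?_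
  ext
  simp

theorem differentiableAt_vnLayer_update (hσ : Differentiable ℝ σ) (hvn : κ → ℝ)
    (H : Fin n → κ → ℝ) (k : Fin n) (y : κ → ℝ) :
    DifferentiableAt ℝ (fun x => vnLayer σ Ωvn Wvn hvn (Function.update H k x)) y :=
  (hasFDerivAt_vnPreact_update hvn H k y).differentiableAt.pointwise_comp fun _ => hσ _

theorem fderiv_vnLayer_update_apply (hσ : Differentiable ℝ σ) (hvn : κ → ℝ)
    (H : Fin n → κ → ℝ) (k : Fin n) (y w : κ → ℝ) :
    fderiv ℝ (fun x => vnLayer σ Ωvn Wvn hvn (Function.update H k x)) y w =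
      ((1 : ℝ) / n) • fun b => deriv σ (vnPreact Ωvn Wvn hvn (Function.update H k y) b) *
        (Wvn *ᵥ w) b := by
  have hpre := hasFDerivAt_vnPreact_update (Ωvn := Ωvn) (Wvn := Wvn) hvn H k y
  refine (fderiv_pointwise_comp_apply (fun _ => hσ _) hpre.differentiableAt w).trans ?_
  rw [hpre.fderiv]
  funext b
  simp [mul_left_comm]

end Layers

theorem mpnn_vn_jacobian_homogeneous_general
    (n d : ℕ)
    (A : Matrix (Fin n) (Fin n) ℝ)
    (σ : ℝ → ℝ) (hσ : Differentiable ℝ σ)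
    (Ω Ωvn Wvn : Matrix (Fin d) (Fin d) ℝ)
    (ψ ψvn : (Fin d → ℝ) → (Fin d → ℝ) → (Fin d → ℝ))
    (hψvn : Differentiable ℝ (fun p : (Fin d → ℝ) × (Fin d → ℝ) => ψvn p.1 p.2))
    -- layer ℓ-1 states of the nodes and of the virtual node
    (H : Fin n → Fin d → ℝ) (hvn : Fin d → ℝ)
    (i k : Fin n) (hik : i ≠ k)
    -- distance between i and k greater than 2:
    (hAik : A i k = 0)
    (hno_common : ∀ j : Fin n, A i j ≠ 0 → A j k = 0 ∧ j ≠ k) :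
    -- layer ℓ node states and VN state, as functions of node k's layer ℓ-1 state x
    ∀ w : Fin d → ℝ,
      fderiv ℝ
        (fun x : Fin d → ℝ =>
          -- layer ℓ states computed from the layer ℓ-1 states with h_k⁽ℓ⁻¹⁾ = x
          let Hs : Fin n → Fin d → ℝ := Function.update H k x
          let hl : Fin n → Fin d → ℝ := fun j a =>
            σ ((Ω.mulVec (Hs j) + (∑ u, A j u • ψ (Hs j) (Hs u))
                + ψvn (Hs j) hvn) a)
          let hvnl : Fin d → ℝ := fun a =>
            σ ((Ωvn.mulVec hvn + Wvn.mulVec (((1 : ℝ) / n) • ∑ j, Hs j)) a)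
          -- layer ℓ+1 state of node i
          fun a => σ ((Ω.mulVec (hl i) + (∑ u, A i u • ψ (hl i) (hl u))
              + ψvn (hl i) hvnl) a))
        (H k) w
      =
      -- the layer ℓ states at the base point x = H k
      (let hl0 : Fin n → Fin d → ℝ := fun j a =>
        σ ((Ω.mulVec (H j) + (∑ u, A j u • ψ (H j) (H u)) + ψvn (H j) hvn) a)
      let zvn : Fin d → ℝ :=
        Ωvn.mulVec hvn + Wvn.mulVec (((1 : ℝ) / n) • ∑ j, H j)
      let hvnl0 : Fin d → ℝ := fun a => σ (zvn a)
      let zi : Fin d → ℝ :=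
        Ω.mulVec (hl0 i) + (∑ u, A i u • ψ (hl0 i) (hl0 u)) + ψvn (hl0 i) hvnl0
      ((1 : ℝ) / n) • fun a =>
        deriv σ (zi a) *
          (fderiv ℝ (fun y => ψvn (hl0 i) y) hvnl0
            (fun b => deriv σ (zvn b) * Wvn.mulVec w b)) a) := by
  intro w
  have hψvn_right : ∀ c y, DifferentiableAt ℝ (ψvn c) y := fun c y =>
    (hψvn (c, y)).comp y ((differentiableAt_const c).prodMk differentiableAt_id)
  change fderiv ℝ (fun x => mpnnLayer A σ Ω ψ ψvn
      (mpnnLayer A σ Ω ψ ψvn (Function.update H k x) hvn)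
      (vnLayer σ Ωvn Wvn hvn (Function.update H k x)) i) (H k) w =
    ((1 : ℝ) / n) • fun a =>
      deriv σ (mpnnPreact A Ω ψ ψvn (mpnnLayer A σ Ω ψ ψvn H hvn) (vnLayer σ Ωvn Wvn hvn H) i a) *
        fderiv ℝ (ψvn (mpnnLayer A σ Ω ψ ψvn H hvn i)) (vnLayer σ Ωvn Wvn hvn H)
          (fun b => deriv σ (vnPreact Ωvn Wvn hvn H b) * (Wvn *ᵥ w) b) a
  simp only [mpnnLayer_mpnnLayer_update_of_dist_gt_two H hvn _ _ hik hAik hno_common]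
  rw [fderiv_fun_comp (x := H k)
      (differentiableAt_mpnnLayer_vn hσ (mpnnLayer A σ Ω ψ ψvn H hvn) i (hψvn_right _ _))
      (differentiableAt_vnLayer_update hσ hvn H k (H k)),
    ContinuousLinearMap.comp_apply, fderiv_vnLayer_update_apply hσ, Function.update_eq_self,
    map_smul, fderiv_mpnnLayer_vn_apply hσ _ i (hψvn_right _ _)]

/-- Sensitivity analysis of MPNN + VN: the virtual-node update is
`h_vn⁽ℓ⁾ = σ(Ω_vn h_vn⁽ℓ⁻¹⁾ + W_vn·(1/n)∑_j h_j⁽ℓ⁻¹⁾)` and the node update is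
`h_i⁽ℓ⁺¹⁾ = σ(Ω h_i⁽ℓ⁾ + ∑_j A_ij ψ(h_i⁽ℓ⁾, h_j⁽ℓ⁾) + ψ_vn(h_i⁽ℓ⁾, h_vn⁽ℓ⁾))`.
For nodes `i, k` at graph distance greater than 2 (no edge `i–k` and no common
neighbor), the Jacobian `∂h_i⁽ℓ⁺¹⁾/∂h_k⁽ℓ⁻¹⁾` equals
`(1/n)·diag(σ'(z_i⁽ℓ⁾))·∇₂ψ_vn(h_i⁽ℓ⁾,h_vn⁽ℓ⁾)·diag(σ'(z_vn⁽ℓ⁻¹⁾))·W_vn`,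
a formula independent of `k`. -/
theorem mpnn_vn_jacobian_homogeneous
    (n d : ℕ) (hn : 0 < n)
    (A : Matrix (Fin n) (Fin n) ℝ)
    (σ : ℝ → ℝ) (hσ : Differentiable ℝ σ)
    (Ω Ωvn Wvn : Matrix (Fin d) (Fin d) ℝ)
    (ψ ψvn : (Fin d → ℝ) → (Fin d → ℝ) → (Fin d → ℝ))
    (hψ : Differentiable ℝ (fun p : (Fin d → ℝ) × (Fin d → ℝ) => ψ p.1 p.2))
    (hψvn : Differentiable ℝ (fun p : (Fin d → ℝ) × (Fin d → ℝ) => ψvn p.1 p.2))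
    -- layer ℓ-1 states of the nodes and of the virtual node
    (H : Fin n → Fin d → ℝ) (hvn : Fin d → ℝ)
    (i k : Fin n) (hik : i ≠ k)
    -- distance between i and k greater than 2:
    (hAik : A i k = 0)
    (hno_common : ∀ j : Fin n, A i j ≠ 0 → A j k = 0 ∧ j ≠ k) :
    -- layer ℓ node states and VN state, as functions of node k's layer ℓ-1 state x
    ∀ w : Fin d → ℝ,
      fderiv ℝ
        (fun x : Fin d → ℝ =>
          -- layer ℓ states computed from the layer ℓ-1 states with h_k⁽ℓ⁻¹⁾ = x
          let Hs : Fin n → Fin d → ℝ := Function.update H k x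
          let hl : Fin n → Fin d → ℝ := fun j a =>
            σ ((Ω.mulVec (Hs j) + (∑ u, A j u • ψ (Hs j) (Hs u))
                + ψvn (Hs j) hvn) a)
          let hvnl : Fin d → ℝ := fun a =>
            σ ((Ωvn.mulVec hvn + Wvn.mulVec (((1 : ℝ) / n) • ∑ j, Hs j)) a)
          -- layer ℓ+1 state of node i
          fun a => σ ((Ω.mulVec (hl i) + (∑ u, A i u • ψ (hl i) (hl u))
              + ψvn (hl i) hvnl) a))
        (H k) w
      =
      -- the layer ℓ states at the base point x = H k
      (let hl0 : Fin n → Fin d → ℝ := fun j a =>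
        σ ((Ω.mulVec (H j) + (∑ u, A j u • ψ (H j) (H u)) + ψvn (H j) hvn) a)
      let zvn : Fin d → ℝ :=
        Ωvn.mulVec hvn + Wvn.mulVec (((1 : ℝ) / n) • ∑ j, H j)
      let hvnl0 : Fin d → ℝ := fun a => σ (zvn a)
      let zi : Fin d → ℝ :=
        Ω.mulVec (hl0 i) + (∑ u, A i u • ψ (hl0 i) (hl0 u)) + ψvn (hl0 i) hvnl0
      ((1 : ℝ) / n) • fun a =>
        deriv σ (zi a) *
          (fderiv ℝ (fun y => ψvn (hl0 i) y) hvnl0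
            (fun b => deriv σ (zvn b) * Wvn.mulVec w b)) a) :=
  mpnn_vn_jacobian_homogeneous_general n d A σ hσ Ω Ωvn Wvn ψ ψvn hψvn H hvn i k hik hAik hno_common
end
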